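/- arXiv:1004.4758 — 4 statements merged into one kernel-verified Lean document; each statement's English description precedes it below -/
import Mathlib

section
/- Let m, p, q be positive integers with gcd(p, q) = 1. Let l, l' ∈ {0, …, mp−1} and k, k' ∈ {0, …, mq−1} satisfy (l − k) ≡ (l' − k') (mod m). Then there exists an integer g with 0 ≤ g ≤ m·p·q − 1 such that for all integers r and s, (k' − k)·p·s − (l' − l)·q·r ≡ g·(p·s − q·r) (mod m·p·q). -/
/-- Lemma 3, part 2: if `(l, k)` and `(l', k')` lie in the same residue class
`(l − k) mod m`, there is `g ∈ {0, …, mpq−1}` with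
`(k' − k)·p·s − (l' − l)·q·r ≡ g·(p·s − q·r) (mod mpq)` for all integers `r, s`. -/
theorem stmt_9 (m p q : ℕ) (hm : 0 < m) (hp : 0 < p) (hq : 0 < q)
    (hpq : Nat.gcd p q = 1)
    (l l' k k' : ℕ) (hl : l < m * p) (hl' : l' < m * p)
    (hk : k < m * q) (hk' : k' < m * q)
    (hres : (m : ℤ) ∣ (((l : ℤ) - (k : ℤ)) - ((l' : ℤ) - (k' : ℤ)))) :
    ∃ g : ℤ, 0 ≤ g ∧ g ≤ (m : ℤ) * (p : ℤ) * (q : ℤ) - 1 ∧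
      ∀ r s : ℤ,
        ((m : ℤ) * (p : ℤ) * (q : ℤ)) ∣
          (((k' : ℤ) - (k : ℤ)) * (p : ℤ) * s - ((l' : ℤ) - (l : ℤ)) * (q : ℤ) * r
            - g * ((p : ℤ) * s - (q : ℤ) * r)) := by
  obtain ⟨t, ht⟩ := hres
  -- Bezout: a*p + b*q = 1
  have hbez : (1 : ℤ) = (p : ℤ) * Nat.gcdA p q + (q : ℤ) * Nat.gcdB p q := by
    have h := Nat.gcd_eq_gcd_ab p q
    rw [hpq] at h; exact_mod_cast h
  set a := Nat.gcdA p q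
  set b := Nat.gcdB p q
  set M : ℤ := (m : ℤ) * (p : ℤ) * (q : ℤ) with hM
  have hMpos : 0 < M := by positivity
  set z : ℤ := ((l' : ℤ) - l) * (b * q) + ((k' : ℤ) - k) * (a * p) with hz
  refine ⟨z % M, Int.emod_nonneg z (ne_of_gt hMpos), by
    have := Int.emod_lt_of_pos z hMpos; omega, ?_⟩
  have hdk : ((m : ℤ) * q) ∣ (z - ((k' : ℤ) - k)) := by
    have : z - ((k' : ℤ) - k) = (m : ℤ) * q * (-(t * b)) := by
      rw [hz]
      linear_combination ((k : ℤ) - k') * hbez - (q : ℤ) * b * ht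
    rw [this]; exact Dvd.intro _ rfl
  have hdl : ((m : ℤ) * p) ∣ (z - ((l' : ℤ) - l)) := by
    have : z - ((l' : ℤ) - l) = (m : ℤ) * p * (t * a) := by
      rw [hz]
      linear_combination ((l : ℤ) - l') * hbez + (p : ℤ) * a * ht
    rw [this]; exact Dvd.intro _ rfl
  have hmod : M ∣ (z - z % M) := Int.dvd_self_sub_of_emod_eq rfl
  have hdk' : ((m : ℤ) * q) ∣ (z % M - ((k' : ℤ) - k)) := by
    have h2 : ((m : ℤ) * q) ∣ M := ⟨p, by ring⟩
    have := (h2.trans hmod)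
    have : ((m : ℤ) * q) ∣ (z - z % M) := h2.trans hmod
    have := dvd_sub hdk this
    simpa using this
  have hdl' : ((m : ℤ) * p) ∣ (z % M - ((l' : ℤ) - l)) := by
    have h2 : ((m : ℤ) * p) ∣ M := ⟨q, by ring⟩
    have : ((m : ℤ) * p) ∣ (z - z % M) := h2.trans hmod
    have := dvd_sub hdl this
    simpa using this
  intro r s
  obtain ⟨u, hu⟩ := hdk'
  obtain ⟨v, hv⟩ := hdl'
  refine ⟨-(u * s) + v * r, ?_⟩
  have hk2 : ((k' : ℤ) - k) = z % M - m * q * u := by linarith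
  have hl2 : ((l' : ℤ) - l) = z % M - m * p * v := by linarith
  rw [hk2, hl2]; ring
end

section
/- Let m, p, q be positive integers and let a, b be integers with a·p + b·q = 1. Let t, h be integers with 0 ≤ t ≤ m·p − 1. If m·p·q divides t + a·h·m·p, then t = 0 and q divides h. -/
/-- Lemma 3, part 3 (arithmetic argument): with `a·p + b·q = 1` and
`0 ≤ t ≤ mp − 1`, if `mpq ∣ t + a·h·m·p` then `t = 0` and `q ∣ h`. -/
theorem stmt_10 (m p q : ℕ) (hm : 0 < m) (hp : 0 < p) (hq : 0 < q)
    (a b : ℤ) (hab : a * (p : ℤ) + b * (q : ℤ) = 1)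
    (t h : ℤ) (ht0 : 0 ≤ t) (ht1 : t ≤ (m : ℤ) * (p : ℤ) - 1)
    (hdvd : ((m : ℤ) * (p : ℤ) * (q : ℤ)) ∣ (t + a * h * (m : ℤ) * (p : ℤ))) :
    t = 0 ∧ (q : ℤ) ∣ h := by
  have hmp : (0:ℤ) < (m:ℤ) * (p:ℤ) := by positivity
  have hmpdvd : ((m:ℤ) * (p:ℤ)) ∣ (t + a * h * (m:ℤ) * (p:ℤ)) :=
    dvd_trans ⟨(q:ℤ), by ring⟩ hdvd
  have hdt : ((m:ℤ) * (p:ℤ)) ∣ t := by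
    have : ((m:ℤ) * (p:ℤ)) ∣ (a * h * (m:ℤ) * (p:ℤ)) := ⟨a * h, by ring⟩
    have := (dvd_sub hmpdvd this)
    simpa using this
  have ht : t = 0 := by
    rcases hdt with ⟨k, hk⟩
    have hk0 : k = 0 := by nlinarith
    simp [hk, hk0]
  refine ⟨ht, ?_⟩
  subst ht
  have : ((m:ℤ) * (p:ℤ) * (q:ℤ)) ∣ (a * h * ((m:ℤ) * (p:ℤ))) := by
    have := hdvd; rw [zero_add] at this; convert this using 1; ring
  have hq1 : (q:ℤ) ∣ a * h := by
    rcases this with ⟨k, hk⟩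
    refine ⟨k, ?_⟩
    have hmp0 : ((m:ℤ) * (p:ℤ)) ≠ 0 := ne_of_gt hmp
    have : (a * h) * ((m:ℤ)*(p:ℤ)) = ((q:ℤ) * k) * ((m:ℤ)*(p:ℤ)) := by linarith [hk]
    exact mul_right_cancel₀ hmp0 (by linarith [this])
  -- gcd(a,q)=1 since a*p + b*q = 1
  have hcop : IsCoprime (q:ℤ) a := ⟨b, p, by linarith [hab]⟩
  exact hcop.dvd_of_dvd_mul_left hq1
end

section
/- Let m, p, q be positive integers, let l, l' ∈ {0, …, mp−1} and k, k' ∈ {0, …, mq−1}. If for all integers r and s one has (k' − k)·p·s − (l' − l)·q·r ≡ 0 (mod m·p·q), then l' = l and k' = k. -/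
/-- Lemma 3, part 3: if `(k' − k)·p·s − (l' − l)·q·r ≡ 0 (mod mpq)` for all
integers `r, s`, then `(l', k') = (l, k)`. -/
theorem stmt_11 (m p q : ℕ) (hm : 0 < m) (hp : 0 < p) (hq : 0 < q)
    (l l' k k' : ℕ) (hl : l < m * p) (hl' : l' < m * p)
    (hk : k < m * q) (hk' : k' < m * q)
    (h : ∀ r s : ℤ,
      ((m : ℤ) * (p : ℤ) * (q : ℤ)) ∣
        (((k' : ℤ) - (k : ℤ)) * (p : ℤ) * s - ((l' : ℤ) - (l : ℤ)) * (q : ℤ) * r)) :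
    l' = l ∧ k' = k := by
  have hpz : (p : ℤ) ≠ 0 := by exact_mod_cast hp.ne'
  have hqz : (q : ℤ) ≠ 0 := by exact_mod_cast hq.ne'
  have h1 := h 0 1
  have h2 := h 1 0
  simp only [mul_zero, mul_one, sub_zero, zero_sub] at h1 h2
  have hk0 : ((m : ℤ) * q) ∣ ((k' : ℤ) - k) := by
    have : ((m : ℤ) * q * p) ∣ ((k' : ℤ) - k) * p := by
      have : (m : ℤ) * p * q = m * q * p := by ring
      rwa [this] at h1
    exact (mul_dvd_mul_iff_right hpz).mp this
  have hl0 : ((m : ℤ) * p) ∣ ((l' : ℤ) - l) := by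
    have h2' : ((m : ℤ) * p * q) ∣ ((l' : ℤ) - l) * q := (dvd_neg.mp h2)
    exact (mul_dvd_mul_iff_right hqz).mp h2'
  have hkeq : (k' : ℤ) = k := by
    have hb : |(k' : ℤ) - k| < (m : ℤ) * q := by
      rw [abs_sub_lt_iff]
      constructor <;> push_cast <;> omega
    have := Int.eq_zero_of_abs_lt_dvd hk0 hb
    linarith
  have hleq : (l' : ℤ) = l := by
    have hb : |(l' : ℤ) - l| < (m : ℤ) * p := by
      rw [abs_sub_lt_iff]
      constructor <;> push_cast <;> omega
    have := Int.eq_zero_of_abs_lt_dvd hl0 hb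
    linarith
  exact ⟨by exact_mod_cast hleq, by exact_mod_cast hkeq⟩
end

section
/- Let R and S be positive integers with R even, let H be an R × S complex matrix, and let x, y : ℝ → ℂ with x periodic of period 2π. Suppose that for all ω ∈ ℝ and all l ∈ {0, …, R−1}: y((ω − 2πl)/R) = Σ_{s=0}^{S−1} H_{l,s} · x((ω − 2πs)/S). Then for all ω ∈ ℝ and all l ∈ {0, …, R−1}: y(π + (ω − 2πl)/R) = Σ_{s=0}^{S−1} H_{l,(s + R/2) mod S} · x((ω − 2πs)/S). -/
open scoped Real

/-! Evaluating the hypothesis at `ω + πR` shifts `ω / R` by `π`, while on the input side it adds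
`2π (R/2)` to `ω`; since `x` is `2π`-periodic, this merely rotates the `S` input bands by `R/2`. -/

theorem Function.Periodic.apply_sub_mul_mod_div {α : Type*} {x : ℝ → α} {c : ℝ}
    (hx : Function.Periodic x c) {S : ℕ} (hS : S ≠ 0) (θ : ℝ) (m : ℕ) :
    x ((θ - c * ((m % S : ℕ) : ℝ)) / S) = x ((θ - c * m) / S) := by
  have hmod : ((m % S : ℕ) : ℝ) = m - S * ((m / S : ℕ) : ℝ) := by
    rw [eq_sub_iff_add_eq]
    exact_mod_cast Nat.mod_add_div m S
  have hS' : (S : ℝ) ≠ 0 := Nat.cast_ne_zero.mpr hS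
  have harg : (θ - c * ((m % S : ℕ) : ℝ)) / S = (θ - c * m) / S + (m / S : ℕ) * c := by
    rw [hmod]
    field_simp
    ring
  rw [harg]
  exact hx.nat_mul _ _

theorem Fin.sum_comp_add_mod {M : Type*} [AddCommMonoid M] {S : ℕ} [NeZero S]
    (f : Fin S → M) (k : ℕ) :
    ∑ s, f s = ∑ u : Fin S, f ⟨((u : ℕ) + k) % S, Nat.mod_lt _ (NeZero.pos S)⟩ := by
  refine (Fintype.sum_equiv (Equiv.addRight (Fin.ofNat S k)) _ _ fun u => congrArg f ?_).symm
  ext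
  simp [Fin.val_add]

theorem stmt_14_general (R S : ℕ) (hS : 0 < S) (hReven : Even R)
    (H : Matrix (Fin R) (Fin S) ℂ) (x y : ℝ → ℂ)
    (hper : ∀ ω : ℝ, x (ω + 2 * π) = x ω)
    (hmod : ∀ ω : ℝ, ∀ l : Fin R,
      y ((ω - 2 * π * (l : ℕ)) / (R : ℝ)) =
        ∑ s : Fin S, H l s * x ((ω - 2 * π * (s : ℕ)) / (S : ℝ))) :
    ∀ ω : ℝ, ∀ l : Fin R,
      y (π + (ω - 2 * π * (l : ℕ)) / (R : ℝ)) =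
        ∑ s : Fin S,
          H l ⟨((s : ℕ) + R / 2) % S, Nat.mod_lt _ hS⟩ *
            x ((ω - 2 * π * (s : ℕ)) / (S : ℝ)) := by
  intro ω l
  have : NeZero S := ⟨hS.ne'⟩
  have hR : (R : ℝ) = 2 * (R / 2 : ℕ) := by
    exact_mod_cast (Nat.two_mul_div_two_of_even hReven).symm
  have hR0 : (R : ℝ) ≠ 0 := Nat.cast_ne_zero.mpr l.pos.ne'
  have hshift :
      (ω + 2 * π * (R / 2 : ℕ) - 2 * π * (l : ℕ)) / R = π + (ω - 2 * π * (l : ℕ)) / R := by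
    field_simp
    rw [hR]
    ring
  rw [← hshift, hmod]
  refine (Fin.sum_comp_add_mod _ (R / 2)).trans (Finset.sum_congr rfl fun u _ => ?_)
  rw [Function.Periodic.apply_sub_mul_mod_div hper hS.ne']
  congr 3
  push_cast
  ring

/-- Lemma 2: if the `R × S` modulation matrix `H` realizes the componentwise
modulation-domain relation between `x` and `y` (with `x` of period `2π`), then the
matrix with columns cyclically rotated by `R/2` realizes the relation with `ω/R`
replaced by `π + ω/R`. -/
theorem stmt_14 (R S : ℕ) (hR : 0 < R) (hS : 0 < S) (hReven : Even R)
    (H : Matrix (Fin R) (Fin S) ℂ) (x y : ℝ → ℂ)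
    (hper : ∀ ω : ℝ, x (ω + 2 * π) = x ω)
    (hmod : ∀ ω : ℝ, ∀ l : Fin R,
      y ((ω - 2 * π * (l : ℕ)) / (R : ℝ)) =
        ∑ s : Fin S, H l s * x ((ω - 2 * π * (s : ℕ)) / (S : ℝ))) :
    ∀ ω : ℝ, ∀ l : Fin R,
      y (π + (ω - 2 * π * (l : ℕ)) / (R : ℝ)) =
        ∑ s : Fin S,
          H l ⟨((s : ℕ) + R / 2) % S, Nat.mod_lt _ hS⟩ *
            x ((ω - 2 * π * (s : ℕ)) / (S : ℝ)) :=
  stmt_14_general R S hS hReven H x y hper hmod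
end
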